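/- Suppose m = p₁·p₂·p₃ where p₁, p₂, p₃ are pairwise coprime integers with 1 < p₁ < p₂ < p₃. Then property P₂ fails for m: there exists a squarefree reducible polynomial f ∈ 𝔽₂[X] of degree m with o(f) = m. -/

import Mathlib

/-!
Irreducible polynomials of degree `n` over `𝔽_q` are plentiful: an element of `𝔽_{q^n}` whose
minimal polynomial has degree `e < n` satisfies `x ^ q ^ e = x` with `e ≤ n / 2`, so at least
`q ^ n - q ^ (n / 2 + 1)` elements have a minimal polynomial of degree `n`, and each such
polynomial accounts for at most `n` of them. Over `𝔽₂` this gives `k` distinct monic irreducibles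
of degree `n` whenever `k + 2 ≤ n`.

Write `p₂ + p₁ y + r = p₁ p₂` with `0 < y < p₂` and `r < p₁`, and let `f` be the product of one
irreducible of degree `p₂ p₃`, `y` of degree `p₁ p₃` and `r` of degree `p₃`. Then
`deg f = p₃ (p₂ + p₁ y + r) = p₁ p₂ p₃`, and `f ∣ X ^ 2 ^ n - X` iff all these degrees divide `n`,
iff `p₁ p₂ p₃ ∣ n`, because `p₁` is coprime to `p₂ p₃`. The factor of degree `p₂ p₃` is a proper
divisor of `f`, so `f` is reducible.
-/

open Polynomial Finset Module

theorem mul_add_two_le_two_pow : ∀ a : ℕ, a * (a + 2) ≤ 2 ^ (a + 1)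
  | 0 | 1 | 2 => by norm_num
  | a + 3 => by
    have := mul_add_two_le_two_pow (a + 2)
    rw [pow_succ]
    nlinarith

theorem mul_add_two_pow_div_two_add_one_le_two_pow {k n : ℕ} (hkn : k + 2 ≤ n) :
    k * n + 2 ^ (n / 2 + 1) ≤ 2 ^ n := by
  rcases (show n = 2 ∨ 3 ≤ n by omega) with rfl | hn
  · obtain rfl : k = 0 := by omega
    norm_num
  obtain ⟨a, rfl⟩ := Nat.exists_eq_add_of_le' hn
  have hk : k * (a + 3) ≤ (a + 1) * (a + 3) := Nat.mul_le_mul_right _ (by omega)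
  have hsq : (a + 1) * (a + 3) ≤ 2 ^ (a + 2) := mul_add_two_le_two_pow (a + 1)
  have hhalf : 2 ^ ((a + 3) / 2 + 1) ≤ 2 ^ (a + 2) := Nat.pow_le_pow_right two_pos (by omega)
  rw [pow_succ 2 (a + 2)]
  omega

theorem Nat.le_div_two_of_dvd_of_ne {e n : ℕ} (hn : n ≠ 0) (h : e ∣ n) (hne : e ≠ n) :
    e ≤ n / 2 := by
  obtain ⟨c, rfl⟩ := h
  have hc : 2 ≤ c := by
    rcases c with _ | _ | c
    · simp at hn
    · simp at hne
    · omega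
  rw [Nat.le_div_iff_mul_le two_pos]
  exact Nat.mul_le_mul_left e hc

theorem Nat.exists_add_mul_add_eq_mul {a b : ℕ} (ha : 1 < a) (hab : a < b) :
    ∃ y r, b + a * y + r = a * b ∧ 0 < y ∧ y < b ∧ r < a := by
  obtain ⟨u, rfl⟩ := Nat.exists_eq_add_of_le' ha.le
  refine ⟨b * u / (u + 1), b * u % (u + 1), ?_, Nat.div_pos (by nlinarith) (by omega),
    Nat.div_lt_of_lt_mul (by nlinarith), Nat.mod_lt _ (by omega)⟩
  linarith [Nat.div_add_mod (b * u) (u + 1)]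

theorem Nat.mul_mul_dvd_iff {a b c n : ℕ} (hab : Coprime a b) (hac : Coprime a c) :
    a * b * c ∣ n ↔ b * c ∣ n ∧ a * c ∣ n := by
  refine ⟨fun h => ⟨dvd_of_mul_left_dvd (mul_assoc a b c ▸ h),
    dvd_trans (Dvd.intro_left b (by ring)) h⟩, fun ⟨hbc, hac'⟩ => ?_⟩
  rw [mul_assoc]
  exact (hab.mul_right hac).mul_dvd_of_dvd_of_dvd (dvd_of_mul_right_dvd hac') hbc

theorem isLeast_of_forall_iff_dvd {P : ℕ → Prop} {m : ℕ} (hm : 0 < m) (hP : ∀ n, P n ↔ m ∣ n) :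
    IsLeast {n | 0 < n ∧ P n} m :=
  ⟨⟨hm, (hP m).2 dvd_rfl⟩, fun _ ⟨hn, h⟩ => Nat.le_of_dvd hn ((hP _).1 h)⟩

theorem card_filter_pow_eq_self_le {F : Type*} [Field F] [Fintype F]
    [DecidableEq F] {N : ℕ} (hN : 1 < N) : #{x : F | x ^ N = x} ≤ N := by
  have hne : (X ^ N - X : F[X]) ≠ 0 := FiniteField.X_pow_card_sub_X_ne_zero F hN
  calc #{x : F | x ^ N = x} ≤ (X ^ N - X : F[X]).natDegree :=
        card_le_degree_of_subset_roots fun x hx => by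
          simp_all [mem_roots hne, sub_eq_zero]
    _ = N := FiniteField.X_pow_card_sub_X_natDegree_eq F hN

section MinpolyCount

variable (K : Type*) {L : Type*} [Field K] [Field L] [Algebra K L]

theorem pow_card_pow_natDegree_minpoly [Finite K] [Finite L] (x : L) :
    x ^ Nat.card K ^ (minpoly K x).natDegree = x := by
  have hx : IsIntegral K x := .of_finite K x
  have hdvd := ((minpoly.irreducible hx).natDegree_dvd_iff_dvd_X_pow_card_pow_sub_X).mp dvd_rfl
  simpa [sub_eq_zero] using aeval_eq_zero_of_dvd_aeval_eq_zero hdvd (minpoly.aeval K x)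

variable [Fintype L]

open Classical in
theorem card_filter_natDegree_minpoly_ne_finrank_le [Finite K] :
    #{x : L | (minpoly K x).natDegree ≠ finrank K L} ≤
      ∑ e ∈ Icc 1 (finrank K L / 2), Nat.card K ^ e := by
  calc #{x : L | (minpoly K x).natDegree ≠ finrank K L}
      ≤ #((Icc 1 (finrank K L / 2)).biUnion fun e => {x : L | x ^ Nat.card K ^ e = x}) := by
        refine card_le_card fun x hx => ?_
        have hx' : IsIntegral K x := .of_finite K x
        refine mem_biUnion.2 ⟨_, mem_Icc.2 ⟨minpoly.natDegree_pos hx', ?_⟩,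
          mem_filter.2 ⟨mem_univ x, pow_card_pow_natDegree_minpoly K x⟩⟩
        exact Nat.le_div_two_of_dvd_of_ne finrank_pos.ne' (minpoly.degree_dvd hx')
          (mem_filter.1 hx).2
    _ ≤ ∑ e ∈ Icc 1 (finrank K L / 2), #{x : L | x ^ Nat.card K ^ e = x} := card_biUnion_le
    _ ≤ ∑ e ∈ Icc 1 (finrank K L / 2), Nat.card K ^ e := sum_le_sum fun e he =>
        card_filter_pow_eq_self_le <| Nat.one_lt_pow (by grind) Finite.one_lt_card

open Classical in
theorem card_filter_natDegree_minpoly_eq_le (d : ℕ) :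
    #{x : L | (minpoly K x).natDegree = d} ≤
      d * #(({x : L | (minpoly K x).natDegree = d} : Finset L).image (minpoly K)) := by
  refine card_le_mul_card_image _ d fun g hg => ?_
  obtain ⟨x₀, hx₀, rfl⟩ := mem_image.1 hg
  have hne : (minpoly K x₀).map (algebraMap K L) ≠ 0 :=
    map_ne_zero (minpoly.ne_zero (.of_finite K x₀))
  calc #{x ∈ {x : L | (minpoly K x).natDegree = d} | minpoly K x = minpoly K x₀}
      ≤ ((minpoly K x₀).map (algebraMap K L)).natDegree :=
        card_le_degree_of_subset_roots fun x hx => by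
          rw [← mem_def, mem_filter] at hx
          rw [mem_roots hne, IsRoot, eval_map_algebraMap, ← hx.2, minpoly.aeval]
    _ = d := by rw [natDegree_map]; exact (mem_filter.1 hx₀).2

open Classical in
theorem card_pow_finrank_le_mul_card_image_minpoly_add [Finite K] :
    Nat.card K ^ finrank K L ≤ finrank K L *
        #(({x : L | (minpoly K x).natDegree = finrank K L} : Finset L).image (minpoly K)) +
      Nat.card K ^ (finrank K L / 2 + 1) := by
  have hsplit := card_filter_add_card_filter_not (s := (univ : Finset L))
    (fun x => (minpoly K x).natDegree = finrank K L)
  have hgeom : ∑ e ∈ Icc 1 (finrank K L / 2), Nat.card K ^ e < Nat.card K ^ (finrank K L / 2 + 1) :=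
    Nat.geomSum_lt Finite.one_lt_card fun e he => by grind
  rw [card_univ, Fintype.card_eq_nat_card, Module.natCard_eq_pow_finrank (K := K)] at hsplit
  have := card_filter_natDegree_minpoly_eq_le K (L := L) (finrank K L)
  have := card_filter_natDegree_minpoly_ne_finrank_le K (L := L)
  simp only [ne_eq] at this
  omega

end MinpolyCount

theorem exists_finset_monic_irreducible_natDegree_eq (K : Type*) [Field K] [Finite K] {n k : ℕ}
    (hn : n ≠ 0) (hk : k * n + Nat.card K ^ (n / 2 + 1) ≤ Nat.card K ^ n) :
    ∃ s : Finset K[X], #s = k ∧ ∀ g ∈ s, g.Monic ∧ Irreducible g ∧ g.natDegree = n := by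
  classical
  obtain ⟨p, _⟩ := CharP.exists K
  have : Fact p.Prime := ⟨CharP.char_is_prime K p⟩
  have : NeZero n := ⟨hn⟩
  let L := FiniteField.Extension K p n
  have := Fintype.ofFinite L
  have hcount := card_pow_finrank_le_mul_card_image_minpoly_add K (L := L)
  set T := ({x : L | (minpoly K x).natDegree = finrank K L} : Finset L).image (minpoly K)
  rw [FiniteField.finrank_extension] at hcount
  obtain ⟨s, hs, rfl⟩ := exists_subset_card_eq (s := T) (n := k) (Nat.le_of_mul_le_mul_left
    (by rw [mul_comm]; omega) (Nat.pos_of_ne_zero hn))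
  refine ⟨s, rfl, fun g hg => ?_⟩
  obtain ⟨x, hx, rfl⟩ := mem_image.1 (hs hg)
  have hx' : IsIntegral K x := .of_finite K x
  exact ⟨minpoly.monic hx', minpoly.irreducible hx',
    (mem_filter.1 hx).2.trans (FiniteField.finrank_extension K p n)⟩

theorem exists_finset_monic_irreducible_zmod_two {n k : ℕ} (h : k + 2 ≤ n) :
    ∃ s : Finset (ZMod 2)[X], #s = k ∧ ∀ g ∈ s, g.Monic ∧ Irreducible g ∧ g.natDegree = n :=
  exists_finset_monic_irreducible_natDegree_eq (ZMod 2) (by omega)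
    (by simpa using mul_add_two_pow_div_two_add_one_le_two_pow h)

theorem prod_dvd_X_pow_card_pow_sub_X_iff {K : Type*} [Field K] [Finite K] {s : Finset K[X]}
    (hs : ∀ g ∈ s, g.Monic ∧ Irreducible g) (n : ℕ) :
    ∏ g ∈ s, g ∣ X ^ Nat.card K ^ n - X ↔ ∀ g ∈ s, g.natDegree ∣ n := by
  refine ⟨fun h g hg => (hs g hg).2.natDegree_dvd_of_dvd_X_pow_card_pow_sub_X
    ((dvd_prod_of_mem _ hg).trans h), fun h => prod_dvd_of_coprime ?_ fun g hg =>
      (hs g hg).2.natDegree_dvd_iff_dvd_X_pow_card_pow_sub_X.1 (h g hg)⟩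
  intro g hg g' hg' hne
  exact (hs g hg).2.coprime_iff_not_dvd.2 fun hdvd => hne <| eq_of_monic_of_associated
    (hs g hg).1 (hs g' hg').1 ((hs g hg).2.associated_of_dvd (hs g' hg').2 hdvd)

theorem Polynomial.Monic.not_irreducible_of_dvd {R : Type*} [CommSemiring R] {f g : R[X]}
    (hf : f.Monic) (hg : g.Monic) (hgu : ¬IsUnit g) (hgf : g ∣ f)
    (hdeg : g.natDegree ≠ f.natDegree) : ¬Irreducible f := fun hirr =>
  hdeg <| congrArg natDegree <|
    eq_of_monic_of_associated hg hf ((hirr.dvd_iff.1 hgf).resolve_left hgu).symm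

theorem Finset.disjoint_of_forall_apply_eq {α β : Type*} {s t : Finset α} {f : α → β} {a b : β}
    (hs : ∀ x ∈ s, f x = a) (ht : ∀ x ∈ t, f x = b) (hab : a ≠ b) : Disjoint s t :=
  disjoint_left.2 fun x hx hx' => hab ((hs x hx).symm.trans (ht x hx'))

theorem exists_finset_irreducible_natDegree_prod_eq {p₁ p₂ p₃ : ℕ} (h1 : 1 < p₁) (h12 : p₁ < p₂)
    (h23 : p₂ < p₃) :
    ∃ S : Finset (ZMod 2)[X], (∀ g ∈ S, g.Monic ∧ Irreducible g ∧
        (g.natDegree = p₂ * p₃ ∨ g.natDegree = p₁ * p₃ ∨ g.natDegree = p₃)) ∧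
      (∏ g ∈ S, g).natDegree = p₁ * p₂ * p₃ ∧
      (∃ g ∈ S, g.natDegree = p₂ * p₃) ∧ (∃ g ∈ S, g.natDegree = p₁ * p₃) := by
  obtain ⟨y, r, hyr, hy, hyp₂, hr⟩ := Nat.exists_add_mul_add_eq_mul h1 h12
  obtain ⟨s₁, hs₁, hs₁'⟩ := exists_finset_monic_irreducible_zmod_two (n := p₂ * p₃) (k := 1)
    (by nlinarith)
  obtain ⟨s₂, hs₂, hs₂'⟩ := exists_finset_monic_irreducible_zmod_two (n := p₁ * p₃) (k := y)
    (by nlinarith)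
  obtain ⟨s₃, hs₃, hs₃'⟩ := exists_finset_monic_irreducible_zmod_two (n := p₃) (k := r)
    (by omega)
  have hd₁₂ : Disjoint s₁ s₂ := disjoint_of_forall_apply_eq (fun g hg => (hs₁' g hg).2.2)
    (fun g hg => (hs₂' g hg).2.2) (by nlinarith)
  have hd₁₃ : Disjoint s₁ s₃ := disjoint_of_forall_apply_eq (fun g hg => (hs₁' g hg).2.2)
    (fun g hg => (hs₃' g hg).2.2) (by nlinarith)
  have hd₂₃ : Disjoint s₂ s₃ := disjoint_of_forall_apply_eq (fun g hg => (hs₂' g hg).2.2)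
    (fun g hg => (hs₃' g hg).2.2) (by nlinarith)
  obtain ⟨g₁, hg₁⟩ := card_pos.1 (hs₁ ▸ one_pos)
  obtain ⟨g₂, hg₂⟩ := card_pos.1 (hs₂ ▸ hy)
  have hS : ∀ g ∈ s₁ ∪ s₂ ∪ s₃, g.Monic ∧ Irreducible g ∧
      (g.natDegree = p₂ * p₃ ∨ g.natDegree = p₁ * p₃ ∨ g.natDegree = p₃) := by
    simp only [mem_union]
    rintro g ((hg | hg) | hg)
    · exact ⟨(hs₁' g hg).1, (hs₁' g hg).2.1, .inl (hs₁' g hg).2.2⟩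
    · exact ⟨(hs₂' g hg).1, (hs₂' g hg).2.1, .inr (.inl (hs₂' g hg).2.2)⟩
    · exact ⟨(hs₃' g hg).1, (hs₃' g hg).2.1, .inr (.inr (hs₃' g hg).2.2)⟩
  refine ⟨s₁ ∪ s₂ ∪ s₃, hS, ?_, ⟨g₁, by simp [hg₁], (hs₁' g₁ hg₁).2.2⟩,
    ⟨g₂, by simp [hg₂], (hs₂' g₂ hg₂).2.2⟩⟩
  rw [natDegree_prod_of_monic _ _ fun g hg => (hS g hg).1,
    sum_union (disjoint_union_left.2 ⟨hd₁₃, hd₂₃⟩), sum_union hd₁₂,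
    sum_const_nat fun g hg => (hs₁' g hg).2.2, sum_const_nat fun g hg => (hs₂' g hg).2.2,
    sum_const_nat fun g hg => (hs₃' g hg).2.2, hs₁, hs₂, hs₃]
  linear_combination p₃ * hyr

theorem stmt_15_general (p₁ p₂ p₃ m : ℕ) (h1 : 1 < p₁) (h12 : p₁ < p₂) (h23 : p₂ < p₃)
    (hc12 : Nat.Coprime p₁ p₂) (hc13 : Nat.Coprime p₁ p₃)
    (hm : m = p₁ * p₂ * p₃) :
    ∃ f : Polynomial (ZMod 2), Squarefree f ∧ ¬Irreducible f ∧ f.natDegree = m ∧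
      IsLeast {n : ℕ | 0 < n ∧ f ∣ X ^ 2 ^ n - X} m := by
  subst hm
  obtain ⟨S, hS, hdeg, ⟨g₁, hg₁, hd₁⟩, ⟨g₂, hg₂, hd₂⟩⟩ :=
    exists_finset_irreducible_natDegree_prod_eq h1 h12 h23
  have hm : 0 < p₁ * p₂ * p₃ := Nat.mul_pos (Nat.mul_pos (by omega) (by omega)) (by omega)
  have hdvd (n : ℕ) : ∏ g ∈ S, g ∣ X ^ 2 ^ n - X ↔ p₁ * p₂ * p₃ ∣ n := by
    have := prod_dvd_X_pow_card_pow_sub_X_iff (fun g hg => ⟨(hS g hg).1, (hS g hg).2.1⟩) n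
    rw [Nat.card_zmod] at this
    rw [this, Nat.mul_mul_dvd_iff hc12 hc13]
    refine ⟨fun h => ⟨hd₁ ▸ h g₁ hg₁, hd₂ ▸ h g₂ hg₂⟩, fun ⟨h₁, h₂⟩ g hg => ?_⟩
    rcases (hS g hg).2.2 with h' | h' | h' <;> rw [h']
    · exact h₁
    · exact h₂
    · exact dvd_of_mul_left_dvd h₁
  have hmonic : (∏ g ∈ S, g).Monic := monic_prod_of_monic _ _ fun g hg => (hS g hg).1
  refine ⟨∏ g ∈ S, g, ?_, ?_, hdeg, isLeast_of_forall_iff_dvd hm hdvd⟩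
  · exact (galois_poly_separable 2 (2 ^ _) (dvd_pow_self 2 hm.ne')).squarefree.squarefree_of_dvd
      ((hdvd _).2 dvd_rfl)
  · refine hmonic.not_irreducible_of_dvd (hS g₁ hg₁).1 (hS g₁ hg₁).2.1.not_isUnit
      (dvd_prod_of_mem _ hg₁) ?_
    rw [hd₁, hdeg]
    nlinarith

/-- If `m = p₁ * p₂ * p₃` with `p₁, p₂, p₃` pairwise coprime and
`1 < p₁ < p₂ < p₃`, then property `P₂` fails for `m`: there is a squarefree reducible
`f ∈ 𝔽₂[X]` of degree `m` whose order `o(f)` (the least positive `n` with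
`f ∣ X^(2^n) - X`) equals `m`. -/
theorem stmt_15 (p₁ p₂ p₃ m : ℕ) (h1 : 1 < p₁) (h12 : p₁ < p₂) (h23 : p₂ < p₃)
    (hc12 : Nat.Coprime p₁ p₂) (hc13 : Nat.Coprime p₁ p₃) (hc23 : Nat.Coprime p₂ p₃)
    (hm : m = p₁ * p₂ * p₃) :
    ∃ f : Polynomial (ZMod 2), Squarefree f ∧ ¬Irreducible f ∧ f.natDegree = m ∧
      IsLeast {n : ℕ | 0 < n ∧ f ∣ X ^ 2 ^ n - X} m :=
  stmt_15_general p₁ p₂ p₃ m h1 h12 h23 hc12 hc13 hm
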